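/- arXiv:2602.19235 — 4 statements merged into one kernel-verified Lean document; each statement's English description precedes it below -/
import Mathlib

section
/- Every finitely generated residually finite group is Hopfian. -/
lemma finite_hom_of_fg (G F : Type*) [Group G] [Group.FG G] [Group F] [Finite F] :
    Finite (G →* F) := by
  obtain ⟨S, hS⟩ := Group.FG.out (G := G)
  have : Function.Injective (fun ψ : G →* F => fun s : S => ψ s) := by
    intro ψ₁ ψ₂ h
    refine MonoidHom.eq_of_eqOn_dense hS ?_
    intro x hx
    exact congrFun h ⟨x, hx⟩
  exact Finite.of_injective _ this

/-- Every finitely generated residually finite group is Hopfian. -/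
theorem statement_3 (G : Type*) [Group G] [Group.FG G]
    (hRF : ∀ g : G, g ≠ 1 → ∃ (F : Type) (_ : Group F) (_ : Finite F) (φ : G →* F), φ g ≠ 1) :
    ∀ φ : G →* G, Function.Surjective φ → Function.Injective φ := by
  intro φ hsurj
  rw [← MonoidHom.ker_eq_bot_iff, eq_bot_iff]
  intro g hg
  simp only [Subgroup.mem_bot]
  by_contra hg1
  obtain ⟨F, _, _, ψ, hψ⟩ := hRF g hg1
  have hfin : Finite (G →* F) := finite_hom_of_fg G F
  have hinj : Function.Injective (fun χ : G →* F => χ.comp φ) := by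
    intro χ₁ χ₂ h
    exact MonoidHom.ext fun x => by
      obtain ⟨y, rfl⟩ := hsurj x
      exact congrArg (fun f : G →* F => f y) h
  obtain ⟨χ, hχ⟩ := (Finite.injective_iff_surjective.mp hinj) ψ
  have : ψ g = χ (φ g) := by rw [← hχ]; rfl
  rw [MonoidHom.mem_ker.mp hg, map_one] at this
  exact hψ this
end

section
/- Let $A$ be a finitely generated abelian group, $B$ a group acting on a set $X$, and $M = \bigoplus_{x\in X} A$ the corresponding $\mathbb{Z}B$-module. Write $A = \bigoplus_{p} A_p$ where $A_p$ is the $p$-primary part for primes $p$ and $A_0 = A/\mathrm{tor}(A)$. Then $\mathrm{End}_{\mathbb{Z}B}(M)$ is directly finite if and only if $\mathrm{End}_{\mathbb{Z}B}(A_p X)$ is directly finite for every $p \geq 0$ with $A_p \neq 0$ (where $A_p X = \bigoplus_{x \in X} A_p$). -/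
open Finsupp SemidirectProduct

/-- The permutation action of `b : B` on the free `A`-module `X →₀ A` on a `B`-set `X`. -/
def permAct {B : Type*} [Group B] {X : Type*} [MulAction B X] {A : Type*} [AddCommGroup A]
    (b : B) : (X →₀ A) ≃+ (X →₀ A) :=
  Finsupp.domCongr (MulAction.toPerm b)

lemma permAct_apply {B : Type*} [Group B] {X : Type*} [MulAction B X] {A : Type*}
    [AddCommGroup A] (b : B) (f : X →₀ A) (x : X) : permAct b f x = f (b⁻¹ • x) := by
  simp [permAct, Finsupp.domCongr, Finsupp.equivMapDomain, MulAction.toPerm]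

/-- Direct finiteness of the endomorphism ring `End_{ℤB}(⨁_{x ∈ X} A)` of the permutation
`ℤB`-module `X →₀ A`, stated elementwise: the `ℤB`-endomorphisms are exactly the additive
endomorphisms commuting with the permutation action of `B`. -/
def EndDF (B : Type*) [Group B] (X : Type*) [MulAction B X] (A : Type*) [AddCommGroup A] :
    Prop :=
  ∀ α β : (X →₀ A) →+ (X →₀ A),
    (∀ (b : B) (f : X →₀ A), α (permAct b f) = permAct b (α f)) →
    (∀ (b : B) (f : X →₀ A), β (permAct b f) = permAct b (β f)) →
    α.comp β = AddMonoidHom.id (X →₀ A) → β.comp α = AddMonoidHom.id (X →₀ A)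

/-!
Each `A_p` and `A / tor A` is a direct summand of the finitely generated group `A`, and direct
finiteness passes from `End_{ℤB}(AX)` to `End_{ℤB}(CX)` for any summand `C`: extend an
endomorphism of `CX` by the identity on the complement.

Conversely, let `αβ = 1` on `AX`, so `γ = βα` is idempotent. The subgroups `A_p X` and
`tor(A) X` are preserved by every additive endomorphism, so the compressions of `α` and `β` to
`A_p X` and to `(A / tor A) X` are again mutually inverse on one side; direct finiteness there
makes `γ` the identity on each `A_p X` and modulo `tor(A) X`. As torsion is generated by its
primary parts, `γ` fixes the torsion element `γ f - f`, which by idempotence is `0`.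
-/

open AddCommGroup

section Extension

variable {M N : Type*} [AddCommGroup M] [AddCommGroup N]

/-- `α ⊕ id` with respect to the splitting `M = im I ⊕ ker R`. -/
def extendAlong (I : N →+ M) (R : M →+ N) (α : N →+ N) : M →+ M :=
  I.comp (α.comp R) + (AddMonoidHom.id M - I.comp R)

variable {I : N →+ M} {R : M →+ N}

lemma extendAlong_apply_of_eq (hRI : ∀ n, R (I n) = n) (α : N →+ N) (n : N) :
    extendAlong I R α (I n) = I (α n) := by
  simp [extendAlong, hRI]

lemma extendAlong_comp (hRI : ∀ n, R (I n) = n) (α β : N →+ N) :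
    (extendAlong I R α).comp (extendAlong I R β) = extendAlong I R (α.comp β) := by
  ext m
  simp [extendAlong, hRI]

lemma extendAlong_id : extendAlong I R (AddMonoidHom.id N) = AddMonoidHom.id M := by
  ext m
  simp [extendAlong]

end Extension

def PermEquivariant (B : Type*) [Group B] {X : Type*} [MulAction B X] {A C : Type*}
    [AddCommGroup A] [AddCommGroup C] (φ : (X →₀ A) →+ (X →₀ C)) : Prop :=
  ∀ (b : B) (f : X →₀ A), φ (permAct b f) = permAct b (φ f)

section Equivariance

variable {B : Type*} [Group B] {X : Type*} [MulAction B X]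
  {A C D : Type*} [AddCommGroup A] [AddCommGroup C] [AddCommGroup D]

lemma permEquivariant_mapRange (φ : A →+ C) :
    PermEquivariant B (Finsupp.mapRange.addMonoidHom (ι := X) φ) := by
  intro b f
  ext x
  simp [permAct_apply]

lemma PermEquivariant.comp {ψ : (X →₀ C) →+ (X →₀ D)} {φ : (X →₀ A) →+ (X →₀ C)}
    (hψ : PermEquivariant B ψ) (hφ : PermEquivariant B φ) : PermEquivariant B (ψ.comp φ) := by
  intro b f
  simp only [AddMonoidHom.comp_apply, hφ b, hψ b]

lemma PermEquivariant.extendAlong {I : (X →₀ C) →+ (X →₀ A)} {R : (X →₀ A) →+ (X →₀ C)}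
    {α : (X →₀ C) →+ (X →₀ C)}
    (hI : PermEquivariant B I) (hR : PermEquivariant B R) (hα : PermEquivariant B α) :
    PermEquivariant B (extendAlong I R α) := by
  intro b f
  simp [_root_.extendAlong, hI b, hR b, hα b]

end Equivariance

namespace EndDF

variable {B : Type*} [Group B] {X : Type*} [MulAction B X] {A C : Type*}
  [AddCommGroup A] [AddCommGroup C]

theorem of_retraction {i : C →+ A} {r : A →+ C} (hri : ∀ c, r (i c) = c)
    (h : EndDF B X A) : EndDF B X C := by
  intro α β hα hβ hαβ
  set I := Finsupp.mapRange.addMonoidHom (ι := X) i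
  set R := Finsupp.mapRange.addMonoidHom (ι := X) r
  have hRI : ∀ g, R (I g) = g := fun g => by ext x; simp [I, R, hri]
  have hI : PermEquivariant B I := permEquivariant_mapRange i
  have hR : PermEquivariant B R := permEquivariant_mapRange r
  have hext : extendAlong I R (β.comp α) = AddMonoidHom.id _ := by
    rw [← extendAlong_comp hRI]
    refine h _ _ (hI.extendAlong hR hα) (hI.extendAlong hR hβ) ?_
    rw [extendAlong_comp hRI, hαβ, extendAlong_id]
  refine AddMonoidHom.ext fun g => Function.LeftInverse.injective hRI ?_
  simpa [extendAlong_apply_of_eq hRI] using DFunLike.congr_fun hext (I g)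

variable {I : (X →₀ C) →+ (X →₀ A)} {R : (X →₀ A) →+ (X →₀ C)}
  {α β : (X →₀ A) →+ (X →₀ A)}

theorem compress_comm (h : EndDF B X C) (hI : PermEquivariant B I) (hR : PermEquivariant B R)
    (hα : PermEquivariant B α) (hβ : PermEquivariant B β)
    (hαβ : ∀ g, R (α (I (R (β (I g))))) = g) (g : X →₀ C) :
    R (β (I (R (α (I g))))) = g :=
  DFunLike.congr_fun (h (R.comp (α.comp I)) (R.comp (β.comp I)) (hR.comp (hα.comp hI))
    (hR.comp (hβ.comp hI)) (AddMonoidHom.ext hαβ)) g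

theorem comp_apply_eq_of_mapsTo (h : EndDF B X C) (hI : PermEquivariant B I)
    (hR : PermEquivariant B R) (hRI : ∀ g, R (I g) = g) (hα : PermEquivariant B α)
    (hβ : PermEquivariant B β) (hαβ : α.comp β = AddMonoidHom.id _) {S : Set (X →₀ A)}
    (hIS : ∀ g, I g ∈ S) (hIR : ∀ f ∈ S, I (R f) = f) (hαS : Set.MapsTo α S S)
    (hβS : Set.MapsTo β S S) {f : X →₀ A} (hf : f ∈ S) : β (α f) = f := by
  have hαβ' : ∀ g, R (α (I (R (β (I g))))) = g := fun g => by
    rw [hIR _ (hβS (hIS g)), ← AddMonoidHom.comp_apply α β, hαβ, AddMonoidHom.id_apply, hRI]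
  have key := h.compress_comm hI hR hα hβ hαβ' (R f)
  rw [hIR f hf, hIR _ (hαS hf)] at key
  rw [← hIR _ (hβS (hαS hf)), key, hIR f hf]

theorem comp_apply_eq_mod_ker (h : EndDF B X C) (hI : PermEquivariant B I)
    (hR : PermEquivariant B R) (hRI : ∀ g, R (I g) = g) (hα : PermEquivariant B α)
    (hβ : PermEquivariant B β) (hαβ : α.comp β = AddMonoidHom.id _)
    (hαK : ∀ f, R f = 0 → R (α f) = 0) (hβK : ∀ f, R f = 0 → R (β f) = 0) (f : X →₀ A) :
    R (β (α f)) = R f := by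
  have mod_ker : ∀ {φ : (X →₀ A) →+ (X →₀ A)}, (∀ f, R f = 0 → R (φ f) = 0) →
      ∀ f, R (φ (I (R f))) = R (φ f) := fun hφ f => by
    rw [← sub_eq_zero, ← map_sub, ← map_sub]
    exact hφ _ (by rw [map_sub, hRI, sub_self])
  have hαβ' : ∀ g, R (α (I (R (β (I g))))) = g := fun g => by
    rw [mod_ker hαK, ← AddMonoidHom.comp_apply α β, hαβ, AddMonoidHom.id_apply, hRI]
  have key := h.compress_comm hI hR hα hβ hαβ' (R f)
  rw [mod_ker hβK] at key
  rw [← key]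
  exact (mod_ker (φ := β.comp α) (fun f hf => hβK _ (hαK f hf)) f).symm

end EndDF

section Primary

variable {M : Type*} [AddCommGroup M]

lemma AddMonoidHom.map_mem_primaryComponent {N : Type*} [AddCommGroup N] (φ : M →+ N) {p : ℕ}
    {x : M} (hx : x ∈ primaryComponent M p) : φ x ∈ primaryComponent N p := by
  obtain ⟨k, hk⟩ := hx
  exact ⟨k, by rw [← map_nsmul, hk, map_zero]⟩

namespace AddCommGroup

lemma primaryComponent_le_torsion {p : ℕ} (hp : p ≠ 0) : primaryComponent M p ≤ torsion M :=
  fun _ ⟨k, hk⟩ => isOfFinAddOrder_iff_nsmul_eq_zero.mpr ⟨p ^ k, by positivity, hk⟩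

theorem torsion_le_of_forall_primaryComponent_le {S : AddSubgroup M}
    (h : ∀ p, p.Prime → primaryComponent M p ≤ S) : torsion M ≤ S := by
  intro x hx
  obtain ⟨n, hn, hnx⟩ := isOfFinAddOrder_iff_nsmul_eq_zero.mp hx
  clear hx
  induction n using Nat.recOnPrimeCoprime generalizing x with
  | zero => exact absurd hn (lt_irrefl 0)
  | prime_pow p k hp => exact h p hp ⟨k, hnx⟩
  | coprime a b ha hb hab iha ihb =>
    obtain ⟨u, v, huv⟩ := Nat.isCoprime_iff_coprime.mpr hab
    have hsplit : x = (u * a) • x + (v * b) • x := by rw [← add_smul, huv, one_smul]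
    have kill : ∀ (c d : ℕ) (w : ℤ), (c * d) • x = 0 → c • ((w * d) • x) = 0 := fun c d w h => by
      rw [← natCast_zsmul, smul_smul, show (c : ℤ) * (w * d) = w * (c * d : ℕ) by push_cast; ring,
        mul_smul, natCast_zsmul, h, smul_zero]
    rw [hsplit]
    exact add_mem (ihb (by omega) (kill b a u (by rwa [mul_comm])))
      (iha (by omega) (kill a b v hnx))

end AddCommGroup

variable {p : ℕ} [hp : Fact p.Prime]

lemma nsmul_factorization_eq_zero_of_mem_primaryComponent {n : ℕ} (hn : n ≠ 0) {t : M}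
    (ht : t ∈ primaryComponent M p) (hnt : n • t = 0) : p ^ n.factorization p • t = 0 := by
  obtain ⟨j, hj⟩ := mem_primaryComponent_iff_addOrderOf.mp ht
  have hjn : p ^ j ∣ n := hj ▸ addOrderOf_dvd_of_nsmul_eq_zero hnt
  rw [← addOrderOf_dvd_iff_nsmul_eq_zero, hj]
  exact pow_dvd_pow p ((hp.out.pow_dvd_iff_le_factorization hn).mp hjn)

lemma exists_retraction_primaryComponent_of_nsmul {n : ℕ} (hn : n ≠ 0) (ρ : M →+ M)
    (hρ : ∀ a, n • ρ a = 0) (hρp : ∀ t ∈ primaryComponent M p, ρ t = t) :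
    ∃ r : M →+ primaryComponent M p, ∀ c : primaryComponent M p, r c = c := by
  set k := n.factorization p
  have hnm : p ^ k * (n / p ^ k) = n := Nat.ordProj_mul_ordCompl_eq_self n p
  obtain ⟨u, v, huv⟩ : IsCoprime ((p ^ k : ℕ) : ℤ) ((n / p ^ k : ℕ) : ℤ) :=
    Nat.isCoprime_iff_coprime.mpr ((Nat.coprime_ordCompl hp.out hn).pow_left k)
  -- `v * (n / p ^ k)` is `1` modulo `p ^ k` and `0` modulo `n / p ^ k`
  set e : M →+ M := (v * (n / p ^ k : ℕ) : ℤ) • ρ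
  have he : ∀ a, e a ∈ primaryComponent M p := fun a => ⟨k, by
    rw [← natCast_zsmul, AddMonoidHom.smul_apply, smul_smul, mul_left_comm, ← Nat.cast_mul, hnm,
      mul_smul, natCast_zsmul, hρ, smul_zero]⟩
  refine ⟨e.codRestrict _ he, fun ⟨t, ht⟩ => Subtype.ext ?_⟩
  have hkt : ((p ^ k : ℕ) : ℤ) • t = 0 := by
    rw [natCast_zsmul]
    refine nsmul_factorization_eq_zero_of_mem_primaryComponent hn ht ?_
    rw [← hρp t ht]
    exact hρ t
  show (v * (n / p ^ k : ℕ) : ℤ) • ρ t = t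
  rw [hρp t ht]
  calc ((v * (n / p ^ k : ℕ) : ℤ)) • t
      = (u * (p ^ k : ℕ) + v * (n / p ^ k : ℕ) : ℤ) • t - (u * (p ^ k : ℕ) : ℤ) • t := by
        rw [add_smul]; abel
    _ = t := by rw [huv, one_smul, mul_smul, hkt, smul_zero, sub_zero]

end Primary

section FinitelyGenerated

variable (A : Type*) [AddCommGroup A] [AddGroup.FG A]

lemma exists_rightInverse_mk_torsion :
    ∃ s : A ⧸ torsion A →+ A, ∀ q, (s q : A ⧸ torsion A) = q := by
  have : Module.Finite ℤ A := Module.Finite.iff_addGroup_fg.mpr ‹_›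
  have hπ := QuotientAddGroup.mk'_surjective (torsion A)
  obtain ⟨s, hs⟩ := Module.projective_lifting_property
    (QuotientAddGroup.mk' (torsion A)).toIntLinearMap LinearMap.id hπ
  exact ⟨s.toAddMonoidHom, fun q => DFunLike.congr_fun hs q⟩

lemma exists_nsmul_eq_zero_of_mem_torsion : ∃ n ≠ 0, ∀ t ∈ torsion A, n • t = 0 := by
  have : Module.Finite ℤ A := Module.Finite.iff_addGroup_fg.mpr ‹_›
  have : Finite (Submodule.torsion ℤ A) :=
    Module.finite_of_fg_torsion _ Submodule.torsion_isTorsion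
  refine ⟨AddMonoid.exponent (Submodule.torsion ℤ A), AddMonoid.exponent_ne_zero_of_finite,
    fun t ht => ?_⟩
  rw [← Submodule.torsion_int] at ht
  simpa using congrArg Subtype.val
    (AddMonoid.exponent_nsmul_eq_zero (⟨t, ht⟩ : Submodule.torsion ℤ A))

lemma exists_retraction_primaryComponent (p : ℕ) [hp : Fact p.Prime] :
    ∃ r : A →+ primaryComponent A p, ∀ c : primaryComponent A p, r c = c := by
  obtain ⟨s, hs⟩ := exists_rightInverse_mk_torsion A
  obtain ⟨n, hn, hT⟩ := exists_nsmul_eq_zero_of_mem_torsion A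
  refine exists_retraction_primaryComponent_of_nsmul hn
    (AddMonoidHom.id A - s.comp (QuotientAddGroup.mk' _)) (fun a => hT _ ?_) (fun t ht => ?_)
  · rw [← QuotientAddGroup.eq_zero_iff]
    simp [hs]
  · have : (t : A ⧸ torsion A) = 0 :=
      (QuotientAddGroup.eq_zero_iff t).mpr (primaryComponent_le_torsion hp.out.ne_zero ht)
    simp [this]

end FinitelyGenerated

namespace Finsupp

variable {X A : Type*} [AddCommGroup A]

lemma mem_of_forall_single_mem {S : AddSubgroup A} {P : AddSubgroup (X →₀ A)}
    (h : ∀ x, ∀ a ∈ S, single x a ∈ P) {f : X →₀ A} (hf : ∀ x, f x ∈ S) : f ∈ P := by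
  rw [← f.sum_single]
  exact AddSubmonoidClass.finsuppSum_mem _ _ _ fun x _ => h x _ (hf x)

lemma mem_primaryComponent_iff {p : ℕ} {f : X →₀ A} :
    f ∈ primaryComponent (X →₀ A) p ↔ ∀ x, f x ∈ primaryComponent A p := by
  refine ⟨fun hf x => (applyAddHom x).map_mem_primaryComponent hf, fun hf => ?_⟩
  refine mem_of_forall_single_mem (fun x a ha => ?_) hf
  obtain ⟨k, hk⟩ := AddCommGroup.mem_primaryComponent.mp ha
  exact ⟨k, by rw [smul_single, hk, single_zero]⟩

lemma mapRange_mk_torsion_eq_zero_iff {f : X →₀ A} :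
    mapRange.addMonoidHom (QuotientAddGroup.mk' (torsion A)) f = 0 ↔
      f ∈ torsion (X →₀ A) := by
  simp only [Finsupp.ext_iff, mapRange.addMonoidHom_apply, mapRange_apply,
    QuotientAddGroup.mk'_apply, QuotientAddGroup.eq_zero_iff, coe_zero, Pi.zero_apply]
  exact ⟨mem_of_forall_single_mem fun x _ ha => (singleAddHom x).isOfFinAddOrder ha,
    fun hf x => show IsOfFinAddOrder (f x) from (applyAddHom x).isOfFinAddOrder hf⟩

end Finsupp

namespace EndDF

variable {B : Type*} [Group B] {X : Type*} [MulAction B X] {A : Type*} [AddCommGroup A]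
  [AddGroup.FG A] {α β : (X →₀ A) →+ (X →₀ A)}

theorem comp_apply_eq_of_mem_primaryComponent {p : ℕ} [Fact p.Prime]
    (h : EndDF B X (primaryComponent A p)) (hα : PermEquivariant B α)
    (hβ : PermEquivariant B β) (hαβ : α.comp β = AddMonoidHom.id _) {f : X →₀ A}
    (hf : f ∈ primaryComponent (X →₀ A) p) : β (α f) = f := by
  obtain ⟨r, hr⟩ := exists_retraction_primaryComponent A p
  refine h.comp_apply_eq_of_mapsTo (permEquivariant_mapRange (primaryComponent A p).subtype)
    (permEquivariant_mapRange r)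
    (fun g => by ext; simp [hr]) hα hβ hαβ
    (fun g => Finsupp.mem_primaryComponent_iff.mpr fun x => by simp)
    (fun f hf => by
      ext x; simpa using congrArg Subtype.val (hr ⟨f x, Finsupp.mem_primaryComponent_iff.mp hf x⟩))
    (fun _ => α.map_mem_primaryComponent) (fun _ => β.map_mem_primaryComponent) hf

theorem comp_apply_sub_mem_torsion (h : EndDF B X (A ⧸ torsion A)) (hα : PermEquivariant B α)
    (hβ : PermEquivariant B β) (hαβ : α.comp β = AddMonoidHom.id _) (f : X →₀ A) :
    β (α f) - f ∈ torsion (X →₀ A) := by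
  obtain ⟨s, hs⟩ := exists_rightInverse_mk_torsion A
  have hK : ∀ (φ : (X →₀ A) →+ (X →₀ A)) (f : X →₀ A),
      Finsupp.mapRange.addMonoidHom (QuotientAddGroup.mk' (torsion A)) f = 0 →
        Finsupp.mapRange.addMonoidHom (QuotientAddGroup.mk' (torsion A)) (φ f) = 0 := by
    simp only [Finsupp.mapRange_mk_torsion_eq_zero_iff]
    exact fun φ _ => φ.isOfFinAddOrder
  rw [← Finsupp.mapRange_mk_torsion_eq_zero_iff, map_sub, sub_eq_zero]
  exact h.comp_apply_eq_mod_ker (permEquivariant_mapRange s) (permEquivariant_mapRange _)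
    (fun g => by ext; simp [hs]) hα hβ hαβ (hK α) (hK β) f

end EndDF

/-- Theorem B (c ↔ b): for `A` a finitely generated abelian group, `End_{ℤB}(⨁_X A)` is
directly finite iff for every `p ≥ 0` with `A_p ≠ 0` the ring `End_{ℤB}(A_p X)` is directly
finite, where `A_p` is the `p`-primary part for a prime `p` and `A_0 = A/tor(A)`. -/
theorem statement_7 (A : Type*) [AddCommGroup A] [AddGroup.FG A]
    (B : Type*) [Group B] (X : Type*) [MulAction B X] :
    EndDF B X A ↔
      ((∀ (p : ℕ) (hp : Fact p.Prime),
          @AddCommGroup.primaryComponent A _ p ≠ ⊥ →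
          EndDF B X (@AddCommGroup.primaryComponent A _ p)) ∧
        (Nontrivial (A ⧸ AddCommGroup.torsion A) →
          EndDF B X (A ⧸ AddCommGroup.torsion A))) := by
  refine ⟨fun h => ⟨fun p _ _ => ?_, fun _ => ?_⟩, ?_⟩
  · obtain ⟨r, hr⟩ := exists_retraction_primaryComponent A p
    exact h.of_retraction (i := (primaryComponent A p).subtype) hr
  · obtain ⟨s, hs⟩ := exists_rightInverse_mk_torsion A
    exact h.of_retraction (r := QuotientAddGroup.mk' _) hs
  rintro ⟨hprimary, hfree⟩ α β hα hβ hαβ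
  have fixes_torsion : torsion (X →₀ A) ≤ AddMonoidHom.eqLocus (β.comp α) (AddMonoidHom.id _) :=
    torsion_le_of_forall_primaryComponent_le fun p hp f hf => by
      have : Fact p.Prime := ⟨hp⟩
      by_cases hbot : primaryComponent A p = ⊥
      · have hf0 : f = 0 := by
          ext x
          simpa [hbot] using Finsupp.mem_primaryComponent_iff.mp hf x
        simp [hf0]
      · exact (hprimary p this hbot).comp_apply_eq_of_mem_primaryComponent hα hβ hαβ hf
  have sub_mem_torsion : ∀ f, β (α f) - f ∈ torsion (X →₀ A) := by
    by_cases hA : Nontrivial (A ⧸ torsion A)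
    · exact (hfree hA).comp_apply_sub_mem_torsion hα hβ hαβ
    · have := not_nontrivial_iff_subsingleton.mp hA
      exact fun f => Finsupp.mapRange_mk_torsion_eq_zero_iff.mp (Subsingleton.elim _ _)
  -- `β ∘ α` is idempotent and fixes `β (α f) - f`
  refine AddMonoidHom.ext fun f => sub_eq_zero.mp ?_
  have hfix : β (α (β (α f) - f)) = β (α f) - f := fixes_torsion (sub_mem_torsion f)
  rwa [map_sub, map_sub, ← AddMonoidHom.comp_apply α β, hαβ, AddMonoidHom.id_apply, sub_self,
    eq_comm] at hfix
end

section
/- Let $B$ be a group, $H \leq B$, and $V = \mathrm{Ind}_H^B(\mathbb{Z}) = \mathbb{Z}[B/H]$. Then the first cohomology group $H^1(B, V)$ is torsion-free as an abelian group: if $f: B \to V$ is a derivation and $z f$ is a principal derivation for some nonzero integer $z$, then $f$ is a principal derivation. -/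
open Finsupp SemidirectProduct

/-!
Evaluating `z • f b = m - b • m` at a point `x` shows `z ∣ m x - m (b⁻¹ • x)`; as `B` acts
transitively on `B ⧸ H`, all values of `m` are congruent modulo `z`, so `m = z • m' + c` for some
finitely supported `m'` and constant `c`. Such a decomposition exists because either `B ⧸ H` is
finite, and then constants are finitely supported, or it is infinite, and then `m` vanishes
somewhere, forcing `z ∣ c`. The constant is `B`-invariant, so `z • f b = z • (m' - b • m')`,
and `z` cancels in the torsion-free group `ℤ[B ⧸ H]`.
-/

open MulAction

theorem Finsupp.exists_eq_mul_add_const_of_modEq {X : Type*} {z : ℤ} (m : X →₀ ℤ)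
    (h : ∀ x y, m x ≡ m y [ZMOD z]) : ∃ (m' : X →₀ ℤ) (c : ℤ), ∀ x, m x = z * m' x + c := by
  cases finite_or_infinite X
  · cases isEmpty_or_nonempty X
    · exact ⟨0, 0, fun x => isEmptyElim x⟩
    · obtain ⟨x₀⟩ := ‹Nonempty X›
      refine ⟨equivFunOnFinite.symm fun x => (m x - m x₀) / z, m x₀, fun x => ?_⟩
      rw [coe_equivFunOnFinite_symm, Int.mul_ediv_cancel' (h x₀ x).dvd, sub_add_cancel]
  · obtain ⟨x₀, hx₀⟩ := m.support.exists_notMem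
    refine ⟨m.mapRange (· / z) (Int.zero_ediv z), 0, fun x => ?_⟩
    have hdvd : z ∣ m x := by simpa [notMem_support_iff.mp hx₀] using (h x₀ x).dvd
    rw [mapRange_apply, Int.mul_ediv_cancel' hdvd, add_zero]

section

variable {B X : Type*} [Group B] [MulAction B X] [IsPretransitive B X]

theorem modEq_of_smul_eq_sub_permAct {f : B → X →₀ ℤ} {z : ℤ} {m : X →₀ ℤ}
    (hm : ∀ b, z • f b = m - permAct b m) (x y : X) : m x ≡ m y [ZMOD z] := by
  obtain ⟨b, rfl⟩ := exists_smul_eq B y x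
  refine (Int.modEq_iff_dvd.mpr ⟨f b (b • y), ?_⟩).symm
  simpa [permAct_apply] using congr($(hm b) (b • y)).symm

theorem exists_eq_sub_permAct_of_smul_eq_sub_permAct {f : B → X →₀ ℤ} {z : ℤ} (hz : z ≠ 0)
    {m : X →₀ ℤ} (hm : ∀ b, z • f b = m - permAct b m) :
    ∃ m' : X →₀ ℤ, ∀ b, f b = m' - permAct b m' := by
  obtain ⟨m', c, hm'⟩ := m.exists_eq_mul_add_const_of_modEq (modEq_of_smul_eq_sub_permAct hm)
  refine ⟨m', fun b => ext fun x => mul_left_cancel₀ hz ?_⟩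
  have hbx := congr($(hm b) x)
  simp only [Finsupp.smul_apply, smul_eq_mul, Finsupp.sub_apply, permAct_apply, hm'] at hbx ⊢
  linarith

end

theorem statement_18_general (B : Type*) [Group B] (H : Subgroup B)
    (f : B → ((B ⧸ H) →₀ ℤ))
    (z : ℤ) (hz : z ≠ 0)
    (hprin : ∃ m : (B ⧸ H) →₀ ℤ, ∀ b : B, z • f b = m - permAct b m) :
    ∃ m : (B ⧸ H) →₀ ℤ, ∀ b : B, f b = m - permAct b m := by
  obtain ⟨m, hm⟩ := hprin
  exact exists_eq_sub_permAct_of_smul_eq_sub_permAct hz hm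

/-- `H¹(B, ℤ[B/H])` is torsion-free: a derivation with a nonzero integer multiple principal
is itself principal. -/
theorem statement_18 (B : Type*) [Group B] (H : Subgroup B)
    (f : B → ((B ⧸ H) →₀ ℤ))
    (hf : ∀ b₁ b₂ : B, f (b₁ * b₂) = f b₁ + permAct b₁ (f b₂))
    (z : ℤ) (hz : z ≠ 0)
    (hprin : ∃ m : (B ⧸ H) →₀ ℤ, ∀ b : B, z • f b = m - permAct b m) :
    ∃ m : (B ⧸ H) →₀ ℤ, ∀ b : B, f b = m - permAct b m :=
  statement_18_general B H f z hz hprin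
end

section
/- Let $m \geq 2$, $B = \langle h_0, t \mid t^{-1}h_0t = h_0^{m+1}\rangle$, $H = \langle h_0 \rangle$, $K$ a commutative ring with $m+1 \in K^*$, and $V = K[B/H]$ with basis point $v = H$. Then the maps $\alpha, \beta: V \to V$ determined by $\alpha(v) = tv$ and $\beta(v) = (\sum_{0 \leq j \leq m} h_0^j) t^{-1} v$ are well-defined $KB$-module endomorphisms of $V$, and $\alpha\beta(v) = (m+1)v$. -/
open Finsupp SemidirectProduct

def BSrel (m : ℕ) : Set (FreeGroup Bool) :=
  {(FreeGroup.of true)⁻¹ * FreeGroup.of false * FreeGroup.of true *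
    ((FreeGroup.of false) ^ (m + 1))⁻¹}

/-- The Baumslag–Solitar group `BS(1, m+1) = ⟨h₀, t | t⁻¹h₀t = h₀^(m+1)⟩`. -/
abbrev BS (m : ℕ) : Type := PresentedGroup (BSrel m)

/-- The generator `h₀`. -/
def bsH0 (m : ℕ) : BS m := PresentedGroup.of false

/-- The generator `t`. -/
def bsT (m : ℕ) : BS m := PresentedGroup.of true

/-- The cyclic subgroup `H = ⟨h₀⟩`. -/
def bsH (m : ℕ) : Subgroup (BS m) := Subgroup.zpowers (bsH0 m)

/-! `V = K[B/H]` is cyclic, generated by `v = H`. An endomorphism sending `v` to a vector `w`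
exists as soon as `w` is fixed by `H`. For `α` this holds because `t⁻¹h₀t ∈ H`; for `β`, left
multiplication by `h₀` permutes the cosets `h₀ʲt⁻¹H` (`0 ≤ j ≤ m`) cyclically, since
`h₀^(m+1)t⁻¹ = t⁻¹h₀`. Then `αβ(v) = ∑ⱼ h₀ʲt⁻¹·α(v) = ∑ⱼ h₀ʲ·v = (m+1)·v`. -/

section PermAct

variable {B : Type*} [Group B] {X : Type*} [MulAction B X] {A : Type*} [AddCommGroup A]

lemma permAct_one (f : X →₀ A) : permAct (1 : B) f = f := by
  ext x
  simp [permAct_apply]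

lemma permAct_mul (a b : B) (f : X →₀ A) : permAct (a * b) f = permAct a (permAct b f) := by
  ext x
  simp [permAct_apply, mul_smul]

lemma permAct_single (b : B) (x : X) (c : A) :
    permAct b (Finsupp.single x c) = Finsupp.single (b • x) c := by
  simp [permAct, Finsupp.equivMapDomain_single, MulAction.toPerm]

lemma permAct_smul {R : Type*} [Ring R] [Module R A] (b : B) (c : R) (f : X →₀ A) :
    permAct b (c • f) = c • permAct b f := by
  ext x
  simp [permAct_apply]

variable (B) in
def permStabilizer (f : X →₀ A) : Subgroup B where
  carrier := {b | permAct b f = f}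
  one_mem' := permAct_one f
  mul_mem' {a b} (ha : permAct a f = f) (hb : permAct b f = f) :=
    show permAct (a * b) f = f by rw [permAct_mul, hb, ha]
  inv_mem' {b} (hb : permAct b f = f) :=
    show permAct b⁻¹ f = f by conv_lhs => rw [← hb, ← permAct_mul, inv_mul_cancel, permAct_one]

lemma mem_permStabilizer {f : X →₀ A} {b : B} : b ∈ permStabilizer B f ↔ permAct b f = f :=
  Iff.rfl

end PermAct

section PermutationModule

variable {G : Type*} [Group G] {H : Subgroup G} {K : Type*} [Ring K]

lemma permAct_single_mk_one_of_mem {h : G} (hh : h ∈ H) (c : K) :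
    permAct h (Finsupp.single ((1 : G) : G ⧸ H) c) = Finsupp.single ((1 : G) : G ⧸ H) c := by
  rw [permAct_single, MulAction.Quotient.smul_mk, smul_eq_mul, mul_one, ← one_mul h,
    QuotientGroup.mk_mul_of_mem 1 hh]

noncomputable def permEndOfFixed (w : G ⧸ H →₀ K) (hw : H ≤ permStabilizer G w) :
    (G ⧸ H →₀ K) →ₗ[K] (G ⧸ H →₀ K) :=
  Finsupp.linearCombination K fun x => Quotient.liftOn' x (fun g => permAct g w) fun a b hab => by
    have hmem : a⁻¹ * b ∈ permStabilizer G w := hw (QuotientGroup.leftRel_apply.mp hab)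
    rw [← mul_inv_cancel_left a b, permAct_mul, mem_permStabilizer.mp hmem]

variable (w : G ⧸ H →₀ K) (hw : H ≤ permStabilizer G w)

lemma permEndOfFixed_single (g : G) (c : K) :
    permEndOfFixed w hw (Finsupp.single (g : G ⧸ H) c) = c • permAct g w :=
  Finsupp.linearCombination_single K c _

lemma permEndOfFixed_single_mk_one :
    permEndOfFixed w hw (Finsupp.single ((1 : G) : G ⧸ H) 1) = w := by
  rw [permEndOfFixed_single, one_smul, permAct_one]

lemma permEndOfFixed_permAct (b : G) (f : G ⧸ H →₀ K) :
    permEndOfFixed w hw (permAct b f) = permAct b (permEndOfFixed w hw f) := by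
  induction f using Finsupp.induction_linear with
  | zero => simp
  | add f₁ f₂ h₁ h₂ => rw [map_add, map_add, h₁, h₂, map_add, map_add]
  | single x c =>
    induction x using QuotientGroup.induction_on with
    | H g =>
      rw [permAct_single, MulAction.Quotient.smul_mk, smul_eq_mul, permEndOfFixed_single,
        permEndOfFixed_single, permAct_smul, permAct_mul]

end PermutationModule

section BaumslagSolitar

variable (m : ℕ) (K : Type*) [Ring K]

lemma bsT_inv_mul_bsH0_mul_bsT : (bsT m)⁻¹ * bsH0 m * bsT m = bsH0 m ^ (m + 1) := by
  have h : PresentedGroup.mk (BSrel m)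
      ((FreeGroup.of true)⁻¹ * FreeGroup.of false * FreeGroup.of true *
        ((FreeGroup.of false) ^ (m + 1))⁻¹) = 1 :=
    (QuotientGroup.eq_one_iff _).mpr (Subgroup.subset_normalClosure rfl)
  simpa [bsT, bsH0, PresentedGroup.of, mul_inv_eq_one] using h

lemma bsH0_mul_bsT : bsH0 m * bsT m = bsT m * bsH0 m ^ (m + 1) := by
  rw [← bsT_inv_mul_bsH0_mul_bsT]
  group

lemma bsH0_pow_succ_mul_bsT_inv : bsH0 m ^ (m + 1) * (bsT m)⁻¹ = (bsT m)⁻¹ * bsH0 m := by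
  rw [← bsT_inv_mul_bsH0_mul_bsT]
  group

noncomputable abbrev bsBase : BS m ⧸ bsH m →₀ K := Finsupp.single ((1 : BS m) : BS m ⧸ bsH m) 1

lemma permAct_bsBase_of_mem {h : BS m} (hh : h ∈ bsH m) :
    permAct h (bsBase m K) = bsBase m K :=
  permAct_single_mk_one_of_mem hh 1

lemma bsH_le_permStabilizer_bsT :
    bsH m ≤ permStabilizer (BS m) (permAct (bsT m) (bsBase m K)) := by
  refine Subgroup.zpowers_le.mpr (mem_permStabilizer.mpr ?_)
  rw [← permAct_mul, bsH0_mul_bsT, permAct_mul,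
    permAct_bsBase_of_mem m K (Subgroup.npow_mem_zpowers _ _)]

noncomputable def bsBetaImage : BS m ⧸ bsH m →₀ K :=
  ∑ j ∈ Finset.range (m + 1), permAct (bsH0 m ^ j * (bsT m)⁻¹) (bsBase m K)

lemma bsH_le_permStabilizer_bsBetaImage : bsH m ≤ permStabilizer (BS m) (bsBetaImage m K) := by
  refine Subgroup.zpowers_le.mpr (mem_permStabilizer.mpr ?_)
  set f : ℕ → BS m ⧸ bsH m →₀ K := fun j => permAct (bsH0 m ^ j * (bsT m)⁻¹) (bsBase m K)
  have hshift : ∀ j, permAct (bsH0 m) (f j) = f (j + 1) := fun j => by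
    simp only [f, ← permAct_mul, ← mul_assoc, ← pow_succ']
  have hwrap : f (m + 1) = f 0 := by
    simp only [f, pow_zero, one_mul]
    rw [bsH0_pow_succ_mul_bsT_inv, permAct_mul,
      permAct_bsBase_of_mem m K (Subgroup.mem_zpowers _)]
  change permAct (bsH0 m) (∑ j ∈ Finset.range (m + 1), f j) = ∑ j ∈ Finset.range (m + 1), f j
  rw [map_sum, Finset.sum_congr rfl fun j _ => hshift j, Finset.sum_range_succ,
    Finset.sum_range_succ' f, hwrap]

end BaumslagSolitar

theorem statement_19_general (m : ℕ) (K : Type*) [CommRing K] :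
    ∃ α β : ((BS m ⧸ bsH m) →₀ K) →ₗ[K] ((BS m ⧸ bsH m) →₀ K),
      (∀ (b : BS m) (f : (BS m ⧸ bsH m) →₀ K), α (permAct b f) = permAct b (α f)) ∧
      (∀ (b : BS m) (f : (BS m ⧸ bsH m) →₀ K), β (permAct b f) = permAct b (β f)) ∧
      α (Finsupp.single ((1 : BS m) : BS m ⧸ bsH m) (1 : K)) =
        permAct (bsT m) (Finsupp.single ((1 : BS m) : BS m ⧸ bsH m) (1 : K)) ∧
      β (Finsupp.single ((1 : BS m) : BS m ⧸ bsH m) (1 : K)) =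
        ∑ j ∈ Finset.range (m + 1),
          permAct (bsH0 m ^ j * (bsT m)⁻¹)
            (Finsupp.single ((1 : BS m) : BS m ⧸ bsH m) (1 : K)) ∧
      α (β (Finsupp.single ((1 : BS m) : BS m ⧸ bsH m) (1 : K))) =
        (m + 1 : K) • Finsupp.single ((1 : BS m) : BS m ⧸ bsH m) (1 : K) := by
  set α := permEndOfFixed _ (bsH_le_permStabilizer_bsT m K)
  set β := permEndOfFixed _ (bsH_le_permStabilizer_bsBetaImage m K)
  have hα : α (bsBase m K) = permAct (bsT m) (bsBase m K) := permEndOfFixed_single_mk_one _ _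
  have hβ : β (bsBase m K) = bsBetaImage m K := permEndOfFixed_single_mk_one _ _
  refine ⟨α, β, permEndOfFixed_permAct _ _, permEndOfFixed_permAct _ _, hα, hβ, ?_⟩
  have hterm : ∀ j : ℕ, α (permAct (bsH0 m ^ j * (bsT m)⁻¹) (bsBase m K)) = bsBase m K := by
    intro j
    rw [permEndOfFixed_permAct, hα, ← permAct_mul, inv_mul_cancel_right,
      permAct_bsBase_of_mem m K (Subgroup.npow_mem_zpowers _ _)]
  rw [hβ, bsBetaImage, map_sum, Finset.sum_congr rfl fun j _ => hterm j, Finset.sum_const,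
    Finset.card_range, ← Nat.cast_smul_eq_nsmul K, Nat.cast_succ]

/-- The explicit `KB`-endomorphisms `α, β` of `V = K[B/H]` (for `B = BS(1,m+1)`, `H = ⟨h₀⟩`)
with `α(v) = t·v`, `β(v) = (∑_{j=0}^m h₀ʲ)·t⁻¹·v` are well defined, and `αβ(v) = (m+1)·v`. -/
theorem statement_19 (m : ℕ) (hm : 2 ≤ m) (K : Type*) [CommRing K]
    (hK : IsUnit ((m : K) + 1)) :
    ∃ α β : ((BS m ⧸ bsH m) →₀ K) →ₗ[K] ((BS m ⧸ bsH m) →₀ K),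
      (∀ (b : BS m) (f : (BS m ⧸ bsH m) →₀ K), α (permAct b f) = permAct b (α f)) ∧
      (∀ (b : BS m) (f : (BS m ⧸ bsH m) →₀ K), β (permAct b f) = permAct b (β f)) ∧
      α (Finsupp.single ((1 : BS m) : BS m ⧸ bsH m) (1 : K)) =
        permAct (bsT m) (Finsupp.single ((1 : BS m) : BS m ⧸ bsH m) (1 : K)) ∧
      β (Finsupp.single ((1 : BS m) : BS m ⧸ bsH m) (1 : K)) =
        ∑ j ∈ Finset.range (m + 1),
          permAct (bsH0 m ^ j * (bsT m)⁻¹)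
            (Finsupp.single ((1 : BS m) : BS m ⧸ bsH m) (1 : K)) ∧
      α (β (Finsupp.single ((1 : BS m) : BS m ⧸ bsH m) (1 : K))) =
        (m + 1 : K) • Finsupp.single ((1 : BS m) : BS m ⧸ bsH m) (1 : K) :=
  statement_19_general m K
end
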